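/- arXiv:1212.3958 — 2 statements merged into one kernel-verified Lean document; each statement's English description precedes it below -/
import Mathlib

section
/- Let β_t be a CPM and ρ^z_t its induced risk measure for z_d < z < z_u. Then ρ^z_t is convex: for c ∈ [0,1] and X, Y ∈ L^{bb}_T, ρ^z_t(cX + (1−c)Y) ≤ c·ρ^z_t(X) + (1−c)·ρ^z_t(Y). -/
open MeasureTheory Filter Set Topology

noncomputable section

variable {Ω : Type*}

/-- The lattice of `m`-measurable random variables bounded from below
(possibly `+∞`-valued). -/
def Lbb (m : MeasurableSpace Ω) : Set (Ω → EReal) :=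
  {X | Measurable[m] X ∧ ∃ c : ℝ, ∀ ω, (c : EReal) ≤ X ω}

/-- `ρ` is the `P`-essential infimum of the family `S` of (`m`-measurable)
random variables. -/
def IsEssInfFam {F : MeasurableSpace Ω} (m : MeasurableSpace Ω) (P : @Measure Ω F)
    (S : Set (Ω → EReal)) (ρ : Ω → EReal) : Prop :=
  Measurable[m] ρ ∧ (∀ ξ ∈ S, ∀ᵐ ω ∂P, ρ ω ≤ ξ ω) ∧
    ∀ η : Ω → EReal, Measurable[m] η → (∀ ξ ∈ S, ∀ᵐ ω ∂P, η ω ≤ ξ ω) →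
      ∀ᵐ ω ∂P, η ω ≤ ρ ω

/-- `g` is, on the set `C`, the `P`-essential supremum of the family `S`. -/
def IsEssSupFamOn {F : MeasurableSpace Ω} (m : MeasurableSpace Ω) (P : @Measure Ω F)
    (S : Set (Ω → EReal)) (g : Ω → EReal) (C : Set Ω) : Prop :=
  (∀ φ ∈ S, ∀ᵐ ω ∂P, ω ∈ C → φ ω ≤ g ω) ∧
    ∀ η : Ω → EReal, Measurable[m] η → (∀ φ ∈ S, ∀ᵐ ω ∂P, ω ∈ C → φ ω ≤ η ω) →
      ∀ᵐ ω ∂P, ω ∈ C → g ω ≤ η ω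

/-- A conditional performance measure (CPM) `β` conditional to the sub-σ-algebra `m`,
defined on `F`-measurable variables bounded from below, with non-random essential
bounds `zd < zu`. -/
structure IsCPM (F m : MeasurableSpace Ω) (P : @Measure Ω F)
    (β : (Ω → EReal) → Ω → EReal) (zd zu : EReal) : Prop where
  maps : ∀ X ∈ Lbb F, β X ∈ Lbb m
  quasiConcave : ∀ X ∈ Lbb F, ∀ Y ∈ Lbb F, ∀ c : ℝ, 0 ≤ c → c ≤ 1 →
    ∀ᵐ ω ∂P, min (β X ω) (β Y ω) ≤
      β (fun ω' => (c : EReal) * X ω' + ((1 - c : ℝ) : EReal) * Y ω') ω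
  lt_bounds : zd < zu
  le_zu : ∀ X ∈ Lbb F, ∀ᵐ ω ∂P, β X ω ≤ zu
  zu_least : ∀ η : Ω → EReal, Measurable[m] η →
    (∀ X ∈ Lbb F, ∀ᵐ ω ∂P, β X ω ≤ η ω) → ∀ᵐ ω ∂P, zu ≤ η ω
  zd_le : ∀ X ∈ Lbb F, ∀ᵐ ω ∂P, zd ≤ β X ω
  zd_greatest : ∀ η : Ω → EReal, Measurable[m] η →
    (∀ X ∈ Lbb F, ∀ᵐ ω ∂P, η ω ≤ β X ω) → ∀ᵐ ω ∂P, η ω ≤ zd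
  mono : ∀ X Y : Ω → EReal, (∀ ω, Y ω ≤ X ω) → ∀ᵐ ω ∂P, β Y ω ≤ β X ω
  strictShift : ∀ X ∈ Lbb F, ∀ c : ℝ, 0 < c →
    ∀ᵐ ω ∂P, β X ω < zu → zd < β (fun ω' => X ω' + (c : EReal)) ω →
      β X ω < β (fun ω' => X ω' + (c : EReal)) ω
  contBelow : ∀ (Xs : ℕ → Ω → EReal) (X : Ω → EReal), (∀ n, Xs n ∈ Lbb F) → X ∈ Lbb F →
    (∀ ω, Monotone fun n => Xs n ω) → (∀ ω, X ω = ⨆ n, Xs n ω) →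
    ∀ᵐ ω ∂P, β X ω = ⨆ n, β (Xs n) ω
  loc : ∀ X ∈ Lbb F, ∀ B : Set Ω, MeasurableSet[m] B →
    ∀ᵐ ω ∂P, ω ∈ B → β X ω = β (B.indicator X) ω
  levelBdd : ∀ z : ℝ, zd < (z : EReal) → (z : EReal) < zu →
    ∃ x : ℝ, ∀ ξ ∈ Lbb m, (∀ᵐ ω ∂P, (z : EReal) ≤ β ξ ω) → ∀ᵐ ω ∂P, (x : EReal) ≤ ξ ω

/-- Scale invariance of a conditional performance measure. -/
def ScaleInvariant (F : MeasurableSpace Ω) (P : @Measure Ω F)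
    (β : (Ω → EReal) → Ω → EReal) : Prop :=
  ∀ X ∈ Lbb F, ∀ c : ℝ, 0 < c → ∀ᵐ ω ∂P, β (fun ω' => (c : EReal) * X ω') ω = β X ω

/-- The set `M^z_t(X) = {ξ ∈ L^{bb}_t : β_t(X + ξ) ≥ z}`. -/
def Mset (F m : MeasurableSpace Ω) (P : @Measure Ω F)
    (β : (Ω → EReal) → Ω → EReal) (z : ℝ) (X : Ω → EReal) : Set (Ω → EReal) :=
  {ξ | ξ ∈ Lbb m ∧ ∀ᵐ ω ∂P, (z : EReal) ≤ β (fun ω' => X ω' + ξ ω') ω}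

/-- The family of simple `m`-measurable variables `φ = Σ z_i 1_{B_i}` with
`zd < φ < zu` and `ρ^{z_i} < 0` on `B_i ∩ C`. -/
def SimpleFam {F : MeasurableSpace Ω} (m : MeasurableSpace Ω) (P : @Measure Ω F)
    (ρ : ℝ → Ω → EReal) (zd zu : EReal) (C : Set Ω) : Set (Ω → EReal) :=
  {φ | ∃ (n : ℕ) (zs : Fin n → ℝ) (Bs : Fin n → Set Ω),
    (∀ i, MeasurableSet[m] (Bs i)) ∧ Pairwise (Function.onFun Disjoint Bs) ∧
    (⋃ i, Bs i) = Set.univ ∧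
    (∀ i, zd < (zs i : EReal) ∧ (zs i : EReal) < zu) ∧
    (∀ i, ∀ ω ∈ Bs i, φ ω = (zs i : EReal)) ∧
    (∀ i, ∀ᵐ ω ∂P, ω ∈ Bs i ∩ C → ρ (zs i) ω < 0)}

/-- A standard family of conditional convex risk measures `(σ^z)_{z ∈ (zd, zu)}`. -/
structure IsStdFamily (F m : MeasurableSpace Ω) (P : @Measure Ω F)
    (σ : ℝ → (Ω → EReal) → Ω → EReal) (zd zu : EReal) : Prop where
  lt_bounds : zd < zu
  maps : ∀ z : ℝ, zd < (z : EReal) → (z : EReal) < zu → ∀ X ∈ Lbb F,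
    Measurable[m] (σ z X) ∧ ∃ C : ℝ, ∀ ω, σ z X ω ≤ (C : EReal)
  boundedOnBounded : ∀ z : ℝ, zd < (z : EReal) → (z : EReal) < zu → ∀ X ∈ Lbb F,
    (∃ C : ℝ, ∀ ω, X ω ≤ (C : EReal)) → ∃ c : ℝ, ∀ ω, (c : EReal) ≤ σ z X ω
  convex : ∀ z : ℝ, zd < (z : EReal) → (z : EReal) < zu →
    ∀ X ∈ Lbb F, ∀ Y ∈ Lbb F, ∀ c : ℝ, 0 ≤ c → c ≤ 1 →
    ∀ᵐ ω ∂P, σ z (fun ω' => (c : EReal) * X ω' + ((1 - c : ℝ) : EReal) * Y ω') ω ≤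
      (c : EReal) * σ z X ω + ((1 - c : ℝ) : EReal) * σ z Y ω
  anti : ∀ z : ℝ, zd < (z : EReal) → (z : EReal) < zu → ∀ X Y : Ω → EReal,
    (∀ ω, Y ω ≤ X ω) → ∀ᵐ ω ∂P, σ z X ω ≤ σ z Y ω
  transInv : ∀ z : ℝ, zd < (z : EReal) → (z : EReal) < zu → ∀ X ∈ Lbb F, ∀ ξ ∈ Lbb m,
    ∀ᵐ ω ∂P, σ z (fun ω' => X ω' + ξ ω') ω = σ z X ω - ξ ω
  loc : ∀ z : ℝ, zd < (z : EReal) → (z : EReal) < zu → ∀ X ∈ Lbb F,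
    ∀ B : Set Ω, MeasurableSet[m] B →
    ∀ᵐ ω ∂P, ω ∈ B → σ z X ω = σ z (B.indicator X) ω
  contBelow : ∀ z : ℝ, zd < (z : EReal) → (z : EReal) < zu →
    ∀ (Xs : ℕ → Ω → EReal) (X : Ω → EReal), (∀ n, Xs n ∈ Lbb F) → X ∈ Lbb F →
    (∀ ω, Monotone fun n => Xs n ω) → (∀ ω, X ω = ⨆ n, Xs n ω) →
    ∀ᵐ ω ∂P, σ z X ω = ⨅ n, σ z (Xs n) ω
  paths : ∀ X ∈ Lbb F, ∀ᵐ ω ∂P,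
    MonotoneOn (fun z : ℝ => σ z X ω) {z : ℝ | zd < (z : EReal) ∧ (z : EReal) < zu} ∧
    ContinuousOn (fun z : ℝ => σ z X ω) {z : ℝ | zd < (z : EReal) ∧ (z : EReal) < zu}
  botLim : zd = ⊥ →
    Tendsto (fun z : ℝ => essSup (σ z (fun _ => 0)) P) atBot (𝓝 (⊥ : EReal))

/-- The set `B_X = ∩_{z ∈ (zd,zu)} {σ^z(X) ≥ 0}`. -/
def BXset (σ : ℝ → (Ω → EReal) → Ω → EReal) (zd zu : EReal) (X : Ω → EReal) : Set Ω :=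
  {ω | ∀ z : ℝ, zd < (z : EReal) → (z : EReal) < zu → 0 ≤ σ z X ω}

/-- `g` is the value at `X` of the performance measure generated by the standard
family `σ`:  `g = zd 1_{B_X} + 1_{B_X^c} esssup{φ simple : σ^{z_i}(X) < 0 on B_i ∩ B_X^c}`. -/
def GeneratedBy (F m : MeasurableSpace Ω) (P : @Measure Ω F)
    (σ : ℝ → (Ω → EReal) → Ω → EReal) (zd zu : EReal)
    (X : Ω → EReal) (g : Ω → EReal) : Prop :=
  (∀ᵐ ω ∂P, ω ∈ BXset σ zd zu X → g ω = zd) ∧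
  IsEssSupFamOn m P (SimpleFam m P (fun z => σ z X) zd zu ((BXset σ zd zu X)ᶜ)) g
    ((BXset σ zd zu X)ᶜ)

/-! Quasi-concavity of `β` makes `M(X)` and `M(Y)` combine convexly:
if `ξ ∈ M(X)` and `η ∈ M(Y)` then `c ξ + (1 - c) η ∈ M(c X + (1 - c) Y)`, so
`ρ(c X + (1 - c) Y) ≤ c ξ + (1 - c) η`. Passing to the essential infimum first in `ξ`, then
in `η`, gives the claim, except for the `EReal` convention `⊥ + ⊤ = ⊥`: the points where
`ρ(X) = -∞` need separate care. There `ρ(c X + (1 - c) Y) = -∞` as well, because by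
continuity from below `β(Y + n) ↑ β(⊤) = zu > z`, so that, up to a null set, every point
lies in a set `{β(Y + n) ≥ z}` on which some element of `M(Y)` is finite. -/

def convexComb (c : ℝ) (X Y : Ω → EReal) : Ω → EReal :=
  fun ω => (c : EReal) * X ω + ((1 - c : ℝ) : EReal) * Y ω

lemma convexComb_zero (X Y : Ω → EReal) : convexComb 0 X Y = Y := by
  funext ω; simp [convexComb]

lemma convexComb_one (X Y : Ω → EReal) : convexComb 1 X Y = X := by
  funext ω; simp [convexComb]

lemma convexComb_one_sub (c : ℝ) (X Y : Ω → EReal) :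
    convexComb (1 - c) Y X = convexComb c X Y := by
  funext ω; simp only [convexComb, sub_sub_cancel]; exact add_comm _ _

namespace Lbb

variable {m F : MeasurableSpace Ω}

lemma bot_lt {X : Ω → EReal} (hX : X ∈ Lbb m) (ω : Ω) : ⊥ < X ω :=
  let ⟨_, c, hc⟩ := hX
  (EReal.bot_lt_coe c).trans_le (hc ω)

lemma mono (hm : m ≤ F) {X : Ω → EReal} (hX : X ∈ Lbb m) : X ∈ Lbb F :=
  ⟨hX.1.mono hm le_rfl, hX.2⟩

lemma const (r : ℝ) : (fun _ : Ω => (r : EReal)) ∈ Lbb m :=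
  ⟨measurable_const, r, fun _ => le_rfl⟩

lemma const_top : (fun _ : Ω => (⊤ : EReal)) ∈ Lbb m :=
  ⟨measurable_const, 0, fun _ => le_top⟩

lemma add {X Y : Ω → EReal} (hX : X ∈ Lbb m) (hY : Y ∈ Lbb m) :
    (fun ω => X ω + Y ω) ∈ Lbb m :=
  let ⟨hXm, a, ha⟩ := hX
  let ⟨hYm, b, hb⟩ := hY
  ⟨hXm.add hYm, a + b, fun ω => by rw [EReal.coe_add]; exact add_le_add (ha ω) (hb ω)⟩

lemma const_mul {X : Ω → EReal} (hX : X ∈ Lbb m) {a : ℝ} (ha : 0 ≤ a) :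
    (fun ω => (a : EReal) * X ω) ∈ Lbb m :=
  let ⟨hXm, u, hu⟩ := hX
  ⟨hXm.const_mul _, a * u, fun ω => by
    rw [EReal.coe_mul]; exact mul_le_mul_of_nonneg_left (hu ω) (EReal.coe_nonneg.2 ha)⟩

lemma convexComb {X Y : Ω → EReal} (hX : X ∈ Lbb m) (hY : Y ∈ Lbb m) {c : ℝ} (hc₀ : 0 ≤ c)
    (hc₁ : c ≤ 1) : convexComb c X Y ∈ Lbb m :=
  add (const_mul hX hc₀) (const_mul hY (sub_nonneg.2 hc₁))

lemma piecewise_top {X : Ω → EReal} (hX : X ∈ Lbb m) {E : Set Ω} [DecidablePred (· ∈ E)]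
    (hE : MeasurableSet[m] E) : E.piecewise X (fun _ => ⊤) ∈ Lbb m := by
  obtain ⟨hXm, a, ha⟩ := hX
  refine ⟨hXm.piecewise hE measurable_const, a, fun ω => ?_⟩
  by_cases hω : ω ∈ E <;> simp [hω, ha ω]

end Lbb

lemma IsEssInfFam.ae_le_of_subset {F m : MeasurableSpace Ω} {P : @Measure Ω F}
    {S T : Set (Ω → EReal)} {ρS ρT : Ω → EReal} (hS : IsEssInfFam m P S ρS)
    (hT : IsEssInfFam m P T ρT) (hST : S ⊆ T) : ∀ᵐ ω ∂P, ρT ω ≤ ρS ω :=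
  hS.2.2 ρT hT.1 fun ξ hξ => hT.2.1 ξ (hST hξ)

namespace EReal

lemma sub_div_le_of_le_add_mul {r g x : EReal} {b : ℝ} (hb : 0 < b)
    (h : r ≤ g + (b : EReal) * x) : (r - g) / (b : EReal) ≤ x :=
  (EReal.div_le_iff_le_mul (EReal.coe_pos.2 hb) (EReal.coe_ne_top b)).2
    (EReal.sub_le_of_le_add' h)

lemma le_add_mul_of_sub_div_le {r g x : EReal} {b : ℝ} (hb : 0 < b) (hg₀ : g ≠ ⊥)
    (hg₁ : g ≠ ⊤) (h : (r - g) / (b : EReal) ≤ x) : r ≤ g + (b : EReal) * x := by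
  rw [EReal.div_le_iff_le_mul (EReal.coe_pos.2 hb) (EReal.coe_ne_top b),
    EReal.sub_le_iff_le_add (.inl hg₀) (.inl hg₁)] at h
  rwa [add_comm]

lemma iSup_add_natCast_eq_top {y : EReal} (hy : y ≠ ⊥) :
    ⨆ n : ℕ, y + ((n : ℝ) : EReal) = ⊤ := by
  refine iSup_eq_top.2 fun b hb => ?_
  induction y using EReal.rec with
  | bot => exact absurd rfl hy
  | top => exact ⟨0, by simpa using hb⟩
  | coe r =>
    obtain ⟨s, hbs, -⟩ := EReal.lt_iff_exists_real_btwn.1 hb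
    obtain ⟨n, hn⟩ := exists_nat_gt (s - r)
    refine ⟨n, hbs.trans ?_⟩
    rw [← EReal.coe_add, EReal.coe_lt_coe_iff]
    linarith

lemma coe_mul_ne_bot {b : ℝ} (hb : 0 < b) {x : EReal} (hx : x ≠ ⊥) : (b : EReal) * x ≠ ⊥ := by
  induction x using EReal.rec <;> simp_all [EReal.coe_mul_top_of_pos, ← EReal.coe_mul]

lemma coe_mul_ne_top {b : ℝ} (hb : 0 < b) {x : EReal} (hx : x ≠ ⊤) : (b : EReal) * x ≠ ⊤ := by
  induction x using EReal.rec <;> simp_all [EReal.coe_mul_bot_of_pos, ← EReal.coe_mul]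

end EReal

lemma IsEssInfFam.ae_le_add_mul {F m : MeasurableSpace Ω} {P : @Measure Ω F}
    {S : Set (Ω → EReal)} {ρ : Ω → EReal} (hρ : IsEssInfFam m P S ρ) {b : ℝ} (hb : 0 < b)
    {r g : Ω → EReal} (hr : Measurable[m] r) (hg : Measurable[m] g)
    (h : ∀ η ∈ S, ∀ᵐ ω ∂P, r ω ≤ g ω + (b : EReal) * η ω) :
    ∀ᵐ ω ∂P, g ω ≠ ⊥ → g ω ≠ ⊤ → r ω ≤ g ω + (b : EReal) * ρ ω := by
  have hmeas : Measurable[m] fun ω => (r ω - g ω) / (b : EReal) :=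
    (hr.add hg.neg).mul_const _
  have hlow : ∀ η ∈ S, ∀ᵐ ω ∂P, (r ω - g ω) / (b : EReal) ≤ η ω := fun η hη =>
    (h η hη).mono fun ω hω => EReal.sub_div_le_of_le_add_mul hb hω
  filter_upwards [hρ.2.2 _ hmeas hlow] with ω hω hg₀ hg₁
  exact EReal.le_add_mul_of_sub_div_le hb hg₀ hg₁ hω

namespace IsCPM

variable {F m : MeasurableSpace Ω} {P : @Measure Ω F} {β : (Ω → EReal) → Ω → EReal}
  {zd zu : EReal}

lemma ae_congr (hβ : IsCPM F m P β zd zu) {X X' : Ω → EReal} (hX : X ∈ Lbb F)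
    (hX' : X' ∈ Lbb F) {B : Set Ω} (hB : MeasurableSet[m] B) (hXX' : EqOn X X' B) :
    ∀ᵐ ω ∂P, ω ∈ B → β X ω = β X' ω := by
  filter_upwards [hβ.loc X hX B hB, hβ.loc X' hX' B hB] with ω h h' hω
  rw [h hω, h' hω, indicator_congr hXX']

lemma ae_const_top_eq (hβ : IsCPM F m P β zd zu) : ∀ᵐ ω ∂P, β (fun _ => ⊤) ω = zu := by
  filter_upwards [hβ.le_zu _ Lbb.const_top,
    hβ.zu_least _ (hβ.maps _ Lbb.const_top).1 fun W _ => hβ.mono _ W fun _ => le_top]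
    with ω h₁ h₂
  exact le_antisymm h₁ h₂

lemma ae_iSup_add_natCast (hβ : IsCPM F m P β zd zu) {Y : Ω → EReal} (hY : Y ∈ Lbb F) :
    ∀ᵐ ω ∂P, ⨆ n : ℕ, β (fun ω' => Y ω' + ((n : ℝ) : EReal)) ω = zu := by
  have hsup := hβ.contBelow _ (fun _ => ⊤) (fun n => Lbb.add hY (Lbb.const n)) Lbb.const_top
    (fun ω n k hnk => add_le_add_right (EReal.coe_le_coe_iff.2 (Nat.cast_le.2 hnk)) _)
    (fun ω => (EReal.iSup_add_natCast_eq_top (Lbb.bot_lt hY ω).ne').symm)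
  filter_upwards [hsup, hβ.ae_const_top_eq] with ω h₁ h₂
  rw [← h₁, h₂]

lemma piecewise_top_mem_Mset (hβ : IsCPM F m P β zd zu) (hm : m ≤ F) {z : ℝ}
    (hz : (z : EReal) < zu) {Y ξ : Ω → EReal} (hY : Y ∈ Lbb F) (hξ : ξ ∈ Lbb m) {E : Set Ω}
    [DecidablePred (· ∈ E)] (hE : MeasurableSet[m] E)
    (hzE : ∀ᵐ ω ∂P, ω ∈ E → (z : EReal) ≤ β (fun ω' => Y ω' + ξ ω') ω) :
    E.piecewise ξ (fun _ => ⊤) ∈ Mset F m P β z Y := by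
  have hη := Lbb.piecewise_top hξ hE
  have hYη := Lbb.add hY (Lbb.mono hm hη)
  have hon : ∀ᵐ ω ∂P, ω ∈ E → β (fun ω' => Y ω' + E.piecewise ξ (fun _ => ⊤) ω') ω =
      β (fun ω' => Y ω' + ξ ω') ω :=
    hβ.ae_congr hYη (Lbb.add hY (Lbb.mono hm hξ)) hE fun ω hω => by simp [hω]
  have hoff : ∀ᵐ ω ∂P, ω ∈ Eᶜ → β (fun ω' => Y ω' + E.piecewise ξ (fun _ => ⊤) ω') ω =
      β (fun _ => ⊤) ω :=
    hβ.ae_congr hYη Lbb.const_top hE.compl fun ω hω => by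
      simp [Set.notMem_of_mem_compl hω, EReal.add_top_of_ne_bot (Lbb.bot_lt hY ω).ne']
  refine ⟨hη, ?_⟩
  filter_upwards [hzE, hon, hoff, hβ.ae_const_top_eq] with ω h₁ h₂ h₃ h₄
  by_cases hω : ω ∈ E
  · rw [h₂ hω]; exact h₁ hω
  · rw [h₃ hω, h₄]; exact hz.le

lemma exists_seq_mem_Mset (hβ : IsCPM F m P β zd zu) (hm : m ≤ F) {z : ℝ}
    (hz : (z : EReal) < zu) {Y : Ω → EReal} (hY : Y ∈ Lbb F) :
    ∃ η : ℕ → Ω → EReal, (∀ n, η n ∈ Mset F m P β z Y) ∧ ∀ᵐ ω ∂P, ∃ n, η n ω ≠ ⊤ := by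
  classical
  let E : ℕ → Set Ω := fun n => {ω | (z : EReal) ≤ β (fun ω' => Y ω' + ((n : ℝ) : EReal)) ω}
  have hE : ∀ n, MeasurableSet[m] (E n) := fun n =>
    (hβ.maps _ (Lbb.add hY (Lbb.const n))).1 measurableSet_Ici
  refine ⟨fun n => (E n).piecewise (fun _ => ((n : ℝ) : EReal)) (fun _ => ⊤),
    fun n => hβ.piecewise_top_mem_Mset hm hz hY (Lbb.const n) (hE n)
      (Eventually.of_forall fun _ hω => hω), ?_⟩
  filter_upwards [hβ.ae_iSup_add_natCast hY] with ω hω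
  obtain ⟨n, hn⟩ := lt_iSup_iff.1 (hω ▸ hz)
  exact ⟨n, by
    rw [Set.piecewise_eq_of_mem _ _ _ (show ω ∈ E n from hn.le)]; exact EReal.coe_ne_top _⟩

lemma convexComb_mem_Mset (hβ : IsCPM F m P β zd zu) (hm : m ≤ F) {z : ℝ} {c : ℝ}
    (hc₀ : 0 ≤ c) (hc₁ : c ≤ 1) {X Y ξ η : Ω → EReal} (hX : X ∈ Lbb F) (hY : Y ∈ Lbb F)
    (hξ : ξ ∈ Mset F m P β z X) (hη : η ∈ Mset F m P β z Y) :
    convexComb c ξ η ∈ Mset F m P β z (convexComb c X Y) := by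
  refine ⟨Lbb.convexComb hξ.1 hη.1 hc₀ hc₁, ?_⟩
  have hq := hβ.quasiConcave _ (Lbb.add hX (Lbb.mono hm hξ.1)) _
    (Lbb.add hY (Lbb.mono hm hη.1)) c hc₀ hc₁
  have hsplit : (fun ω => (c : EReal) * (X ω + ξ ω) + ((1 - c : ℝ) : EReal) * (Y ω + η ω)) =
      fun ω => convexComb c X Y ω + convexComb c ξ η ω := by
    funext ω
    rw [EReal.left_distrib_of_nonneg_of_ne_top (EReal.coe_nonneg.2 hc₀) (EReal.coe_ne_top _),
      EReal.left_distrib_of_nonneg_of_ne_top (EReal.coe_nonneg.2 (sub_nonneg.2 hc₁))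
        (EReal.coe_ne_top _), add_add_add_comm]
    rfl
  rw [hsplit] at hq
  filter_upwards [hq, hξ.2, hη.2] with ω h h₁ h₂
  exact (le_min h₁ h₂).trans h


variable {z c : ℝ} {X Y ρX ρY ρZ : Ω → EReal}

lemma ae_le_convexComb_of_mem_Mset (hβ : IsCPM F m P β zd zu) (hm : m ≤ F) (hc₀ : 0 < c)
    (hc₁ : c < 1) (hX : X ∈ Lbb F) (hY : Y ∈ Lbb F)
    (h₁ : IsEssInfFam m P (Mset F m P β z X) ρX)
    (h₃ : IsEssInfFam m P (Mset F m P β z (convexComb c X Y)) ρZ)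
    {η : Ω → EReal} (hη : η ∈ Mset F m P β z Y) :
    ∀ᵐ ω ∂P, η ω ≠ ⊤ → ρZ ω ≤ convexComb c ρX η ω := by
  have hbound := h₁.ae_le_add_mul hc₀ h₃.1 (hη.1.1.const_mul _) fun ξ hξ =>
    (h₃.2.1 _ (hβ.convexComb_mem_Mset hm hc₀.le hc₁.le hX hY hξ hη)).mono fun ω h =>
      h.trans_eq (add_comm _ _)
  filter_upwards [hbound] with ω h hηω
  rw [convexComb, add_comm]
  exact h (EReal.coe_mul_ne_bot (sub_pos.2 hc₁) (Lbb.bot_lt hη.1 ω).ne')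
    (EReal.coe_mul_ne_top (sub_pos.2 hc₁) hηω)

lemma ae_eq_bot_of_eq_bot (hβ : IsCPM F m P β zd zu) (hm : m ≤ F) (hz : (z : EReal) < zu)
    (hc₀ : 0 < c) (hc₁ : c < 1) (hX : X ∈ Lbb F) (hY : Y ∈ Lbb F)
    (h₁ : IsEssInfFam m P (Mset F m P β z X) ρX)
    (h₃ : IsEssInfFam m P (Mset F m P β z (convexComb c X Y)) ρZ) :
    ∀ᵐ ω ∂P, ρX ω = ⊥ → ρZ ω = ⊥ := by
  obtain ⟨η, hηM, hfin⟩ := hβ.exists_seq_mem_Mset hm hz hY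
  have hle := ae_all_iff.2 fun n =>
    hβ.ae_le_convexComb_of_mem_Mset hm hc₀ hc₁ hX hY h₁ h₃ (hηM n)
  filter_upwards [hle, hfin] with ω hle ⟨n, hn⟩ hbot
  simpa [convexComb, hbot, EReal.coe_mul_bot_of_pos hc₀] using hle n hn

lemma ae_le_convexComb_of_pos_of_lt_one (hβ : IsCPM F m P β zd zu) (hm : m ≤ F)
    (hz : (z : EReal) < zu) (hc₀ : 0 < c) (hc₁ : c < 1) (hX : X ∈ Lbb F) (hY : Y ∈ Lbb F)
    (h₁ : IsEssInfFam m P (Mset F m P β z X) ρX)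
    (h₂ : IsEssInfFam m P (Mset F m P β z Y) ρY)
    (h₃ : IsEssInfFam m P (Mset F m P β z (convexComb c X Y)) ρZ) :
    ∀ᵐ ω ∂P, ρZ ω ≤ convexComb c ρX ρY ω := by
  have hXbot := hβ.ae_eq_bot_of_eq_bot hm hz hc₀ hc₁ hX hY h₁ h₃
  have hYbot := hβ.ae_eq_bot_of_eq_bot hm hz (sub_pos.2 hc₁) (sub_lt_self 1 hc₀) hY hX h₂
    ((convexComb_one_sub c X Y).symm ▸ h₃)
  have hbound : ∀ η ∈ Mset F m P β z Y, ∀ᵐ ω ∂P,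
      ρZ ω ≤ (c : EReal) * ρX ω + ((1 - c : ℝ) : EReal) * η ω := fun η hη => by
    filter_upwards [hβ.ae_le_convexComb_of_mem_Mset hm hc₀ hc₁ hX hY h₁ h₃ hη, hXbot]
      with ω hle hbot
    by_cases hηω : η ω = ⊤
    · by_cases hρX : ρX ω = ⊥
      · simp [hbot hρX]
      · rw [hηω, EReal.coe_mul_top_of_pos (sub_pos.2 hc₁),
          EReal.add_top_of_ne_bot (EReal.coe_mul_ne_bot hc₀ hρX)]
        exact le_top
    · exact hle hηω
  filter_upwards [h₂.ae_le_add_mul (sub_pos.2 hc₁) h₃.1 (h₁.1.const_mul _) hbound, hXbot, hYbot]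
    with ω hle hXb hYb
  by_cases hρX₀ : ρX ω = ⊥
  · simp [hXb hρX₀]
  by_cases hρX₁ : ρX ω = ⊤
  · by_cases hρY : ρY ω = ⊥
    · simp [hYb hρY]
    rw [convexComb, hρX₁, EReal.coe_mul_top_of_pos hc₀,
      EReal.top_add_of_ne_bot (EReal.coe_mul_ne_bot (sub_pos.2 hc₁) hρY)]
    exact le_top
  exact hle (EReal.coe_mul_ne_bot hc₀ hρX₀) (EReal.coe_mul_ne_top hc₀ hρX₁)

end IsCPM

theorem stmt_8_general {Ω : Type*} (F m : MeasurableSpace Ω) (hm : m ≤ F) (P : @Measure Ω F)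
    (β : (Ω → EReal) → Ω → EReal) (zd zu : EReal)
    (hCPM : IsCPM F m P β zd zu)
    (z : ℝ) (hz₂ : (z : EReal) < zu)
    (c : ℝ) (hc₀ : 0 ≤ c) (hc₁ : c ≤ 1)
    (X Y : Ω → EReal) (hX : X ∈ Lbb F) (hY : Y ∈ Lbb F)
    (ρX ρY ρZ : Ω → EReal)
    (h₁ : IsEssInfFam m P (Mset F m P β z X) ρX)
    (h₂ : IsEssInfFam m P (Mset F m P β z Y) ρY)
    (h₃ : IsEssInfFam m P
      (Mset F m P β z (fun ω => (c : EReal) * X ω + ((1 - c : ℝ) : EReal) * Y ω)) ρZ) :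
    ∀ᵐ ω ∂P, ρZ ω ≤ (c : EReal) * ρX ω + ((1 - c : ℝ) : EReal) * ρY ω := by
  change ∀ᵐ ω ∂P, ρZ ω ≤ convexComb c ρX ρY ω
  change IsEssInfFam m P (Mset F m P β z (convexComb c X Y)) ρZ at h₃
  rcases hc₀.eq_or_lt with rfl | hc₀
  · rw [convexComb_zero] at h₃ ⊢
    exact h₂.ae_le_of_subset h₃ subset_rfl
  rcases hc₁.eq_or_lt with rfl | hc₁
  · rw [convexComb_one] at h₃ ⊢
    exact h₁.ae_le_of_subset h₃ subset_rfl
  exact hCPM.ae_le_convexComb_of_pos_of_lt_one hm hz₂ hc₀ hc₁ hX hY h₁ h₂ h₃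

/-- convexity of the induced risk measure `ρ^z_t`. -/
theorem stmt_8 {Ω : Type*} (F m : MeasurableSpace Ω) (hm : m ≤ F) (P : @Measure Ω F)
    (β : (Ω → EReal) → Ω → EReal) (zd zu : EReal)
    (hCPM : IsCPM F m P β zd zu)
    (z : ℝ) (hz₁ : zd < (z : EReal)) (hz₂ : (z : EReal) < zu)
    (c : ℝ) (hc₀ : 0 ≤ c) (hc₁ : c ≤ 1)
    (X Y : Ω → EReal) (hX : X ∈ Lbb F) (hY : Y ∈ Lbb F)
    (ρX ρY ρZ : Ω → EReal)
    (h₁ : IsEssInfFam m P (Mset F m P β z X) ρX)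
    (h₂ : IsEssInfFam m P (Mset F m P β z Y) ρY)
    (h₃ : IsEssInfFam m P
      (Mset F m P β z (fun ω => (c : EReal) * X ω + ((1 - c : ℝ) : EReal) * Y ω)) ρZ) :
    ∀ᵐ ω ∂P, ρZ ω ≤ (c : EReal) * ρX ω + ((1 - c : ℝ) : EReal) * ρY ω :=
  stmt_8_general F m hm P β zd zu hCPM z hz₂ c hc₀ hc₁ X Y hX hY ρX ρY ρZ h₁ h₂ h₃
end
end

section
/- A CPM β_t can be reconstructed from its induced family of risk measures: if z_d = −∞, then for every X ∈ L^{bb}_T, β_t(X) = ess sup{φ simple F_t-measurable, φ < z_u, φ = Σ_{i=1}^n z_i 1_{B_i}, such that ρ^{z_i}_t(X) < 0 on B_i for all i}. -/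
open MeasureTheory Filter Set Topology

noncomputable section

variable {Ω : Type*}

/-!
On `{β_t(X) < z}` every `ξ ∈ M^z_t(X)` is positive, since on `{ξ ≤ 0}` locality and monotonicity
give `β_t(X + ξ) ≤ β_t(X)`; so `ρ^z_t(X) ≥ 0` there, and every admissible simple `φ` lies below
`β_t(X)`. Conversely, continuity from below gives `β_t(X + u_n) ↑ β_t(X)` for `u_n = -1/(n+1)`.
Taking `ξ = u_n` where `β_t(X + u_n)` first exceeds `z`, and `ξ = +∞` (where `β_t = z_u`)
elsewhere, yields an element of `M^z_t(X)` that is negative on `{β_t(X) > z}`, so `ρ^z_t(X) < 0`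
there. Hence for rational `q < z_u` the variable equal to `q` on `{β_t(X) > q}` and to a constant
below `β_t(X)` elsewhere is admissible, and every essential upper bound of the family dominates
`β_t(X)`.
-/

theorem EReal.iSup_add_coe_eq {u : ℕ → ℝ} (hu : Monotone u) (hlim : Tendsto u atTop (𝓝 0))
    (x : EReal) : ⨆ n, x + (u n : EReal) = x := by
  refine iSup_eq_of_tendsto (fun a b hab => add_le_add_right (EReal.coe_le_coe (hu hab)) x) ?_
  have hcont : ContinuousAt (fun p : EReal × EReal => p.1 + p.2) (x, 0) :=
    EReal.continuousAt_add (Or.inr (by simp)) (Or.inr (by simp))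
  simpa [Function.comp_def] using hcont.tendsto.comp
    (tendsto_const_nhds.prodMk_nhds ((continuous_coe_real_ereal.tendsto 0).comp hlim))

theorem iInf_piecewise_top_eq_top_or {α : Type*} [CompleteLattice α] {u : ℕ → α}
    (hu : Monotone u) (B : ℕ → Set Ω) [∀ n, DecidablePred (· ∈ B n)] (ω : Ω) :
    (⨅ n, (B n).piecewise (fun _ => u n) (fun _ => ⊤) ω) = ⊤ ∨
      ∃ n, ω ∈ B n ∧ u n ≤ ⨅ k, (B k).piecewise (fun _ => u k) (fun _ => ⊤) ω := by
  by_cases h : ∃ n, ω ∈ B n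
  · refine Or.inr ⟨Nat.find h, Nat.find_spec h, le_iInf fun k => ?_⟩
    by_cases hk : ω ∈ B k
    · rw [Set.piecewise_eq_of_mem _ _ _ hk]
      exact hu (Nat.find_min' h hk)
    · rw [Set.piecewise_eq_of_notMem _ _ _ hk]
      exact le_top
  · push Not at h
    exact Or.inl (iInf_eq_top.2 fun n => Set.piecewise_eq_of_notMem _ _ _ (h n))

theorem bot_lt_of_mem_Lbb {M : MeasurableSpace Ω} {X : Ω → EReal} (hX : X ∈ Lbb M) (ω : Ω) :
    ⊥ < X ω := by
  obtain ⟨-, c, hc⟩ := hX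
  exact (EReal.bot_lt_coe c).trans_le (hc ω)

theorem top_mem_Lbb (M : MeasurableSpace Ω) : (fun _ => ⊤) ∈ Lbb M :=
  ⟨measurable_const, 0, fun _ => le_top⟩

theorem add_mem_Lbb {F m : MeasurableSpace Ω} (hm : m ≤ F) {X ξ : Ω → EReal} (hX : X ∈ Lbb F)
    (hξ : ξ ∈ Lbb m) : (fun ω => X ω + ξ ω) ∈ Lbb F := by
  obtain ⟨hXm, c, hc⟩ := hX
  obtain ⟨hξm, d, hd⟩ := hξ
  refine ⟨hXm.add (hξm.mono hm le_rfl), c + d, fun ω => ?_⟩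
  rw [EReal.coe_add]
  exact add_le_add (hc ω) (hd ω)

theorem add_coe_mem_Lbb {F : MeasurableSpace Ω} {X : Ω → EReal} (hX : X ∈ Lbb F) (r : ℝ) :
    (fun ω => X ω + (r : EReal)) ∈ Lbb F :=
  add_mem_Lbb le_rfl hX ⟨measurable_const, r, fun _ => le_rfl⟩

theorem IsEssInfFam.ae_le_on {F m : MeasurableSpace Ω} {P : @Measure Ω F}
    {S : Set (Ω → EReal)} {ρ : Ω → EReal} (hρ : IsEssInfFam m P S ρ) {A : Set Ω}
    (hA : MeasurableSet[m] A) {c : EReal} (h : ∀ ξ ∈ S, ∀ᵐ ω ∂P, ω ∈ A → c ≤ ξ ω) :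
    ∀ᵐ ω ∂P, ω ∈ A → c ≤ ρ ω := by
  classical
  have hlow := hρ.2.2 (A.piecewise (fun _ => c) (fun _ => ⊥))
    (measurable_const.piecewise hA measurable_const) fun ξ hξ => by
      filter_upwards [h ξ hξ] with ω hω
      by_cases hωA : ω ∈ A
      · simpa [hωA] using hω hωA
      · simp [hωA]
  filter_upwards [hlow] with ω hω hωA
  simpa [hωA] using hω

theorem ae_le_of_forall_rat_lt {M : MeasurableSpace Ω} {P : Measure Ω} {g η : Ω → EReal}
    {zu : EReal} (hg : ∀ᵐ ω ∂P, g ω ≤ zu)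
    (h : ∀ q : ℚ, ((q : ℝ) : EReal) < zu →
      ∀ᵐ ω ∂P, ((q : ℝ) : EReal) < g ω → ((q : ℝ) : EReal) ≤ η ω) :
    ∀ᵐ ω ∂P, g ω ≤ η ω := by
  have h' : ∀ q : ℚ, ∀ᵐ ω ∂P,
      ((q : ℝ) : EReal) < zu → ((q : ℝ) : EReal) < g ω → ((q : ℝ) : EReal) ≤ η ω := by
    intro q
    by_cases hq : ((q : ℝ) : EReal) < zu
    · filter_upwards [h q hq] with ω hω _ using hω
    · exact .of_forall fun ω hq' => absurd hq' hq
  filter_upwards [ae_all_iff.2 h', hg] with ω hω hgω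
  by_contra hlt
  obtain ⟨q, hηq, hqg⟩ := EReal.exists_rat_btwn_of_lt (not_le.1 hlt)
  exact (hω q (hqg.trans_le hgω) hqg).not_gt hηq

section SimpleFam

variable {F m : MeasurableSpace Ω} {P : @Measure Ω F} {ρ : ℝ → Ω → EReal} {zd zu : EReal}
  {C : Set Ω}

theorem ae_le_of_mem_SimpleFam {g : Ω → EReal}
    (hg : ∀ z : ℝ, (z : EReal) < zu → ∀ᵐ ω ∂P, g ω < z → 0 ≤ ρ z ω) {φ : Ω → EReal}
    (hφ : φ ∈ SimpleFam m P ρ zd zu C) : ∀ᵐ ω ∂P, ω ∈ C → φ ω ≤ g ω := by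
  obtain ⟨n, zs, Bs, -, -, hcover, hbds, hval, hneg⟩ := hφ
  have hpiece : ∀ i, ∀ᵐ ω ∂P, ω ∈ Bs i ∩ C → (zs i : EReal) ≤ g ω := fun i => by
    filter_upwards [hneg i, hg (zs i) (hbds i).2] with ω hneg hg hω
    exact not_lt.1 fun hlt => (hneg hω).not_ge (hg hlt)
  filter_upwards [ae_all_iff.2 hpiece] with ω hω hωC
  obtain ⟨i, hi⟩ := Set.mem_iUnion.1 (hcover ▸ Set.mem_univ ω)
  rw [hval i ω hi]
  exact hω i ⟨hi, hωC⟩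

theorem piecewise_mem_SimpleFam {B : Set Ω} [DecidablePred (· ∈ B)] (hB : MeasurableSet[m] B)
    {a b : ℝ} (ha : zd < a ∧ (a : EReal) < zu) (hb : zd < b ∧ (b : EReal) < zu)
    (hρa : ∀ᵐ ω ∂P, ω ∈ B ∩ C → ρ a ω < 0) (hρb : ∀ᵐ ω ∂P, ω ∈ Bᶜ ∩ C → ρ b ω < 0) :
    B.piecewise (fun _ => (a : EReal)) (fun _ => (b : EReal)) ∈ SimpleFam m P ρ zd zu C := by
  refine ⟨2, ![a, b], ![B, Bᶜ], ?_, ?_, ?_, ?_, ?_, ?_⟩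
  · simpa [Fin.forall_fin_two] using hB
  · intro i j hij
    fin_cases i <;> fin_cases j <;>
      simp_all [Function.onFun, disjoint_compl_right, disjoint_compl_left]
  · simp [Set.iUnion_eq_univ_iff, Fin.exists_fin_two, em]
  · simpa [Fin.forall_fin_two] using ⟨ha, hb⟩
  · simp only [Fin.forall_fin_two]
    exact ⟨fun ω hω => Set.piecewise_eq_of_mem _ _ _ hω,
      fun ω hω => Set.piecewise_eq_of_notMem _ _ _ hω⟩
  · simp only [Fin.forall_fin_two, Matrix.cons_val_zero, Matrix.cons_val_one]
    exact ⟨hρa, hρb⟩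

end SimpleFam

namespace IsCPM

variable {F m : MeasurableSpace Ω} {P : @Measure Ω F} {β : (Ω → EReal) → Ω → EReal}
  {zd zu : EReal} {X : Ω → EReal}

theorem ae_le_on (hβ : IsCPM F m P β zd zu) {Y : Ω → EReal} (hX : X ∈ Lbb F)
    (hY : Y ∈ Lbb F) {B : Set Ω} (hB : MeasurableSet[m] B) (h : ∀ ω ∈ B, Y ω ≤ X ω) :
    ∀ᵐ ω ∂P, ω ∈ B → β Y ω ≤ β X ω := by
  have hmono := hβ.mono (B.indicator X) (B.indicator Y) fun ω => by
    by_cases hω : ω ∈ B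
    · simpa [hω] using h ω hω
    · simp [hω]
  filter_upwards [hβ.loc Y hY B hB, hβ.loc X hX B hB, hmono] with ω hYB hXB hmono hω
  rw [hYB hω, hXB hω]
  exact hmono

theorem ae_le_apply_top (hβ : IsCPM F m P β zd zu) : ∀ᵐ ω ∂P, zu ≤ β (fun _ => ⊤) ω :=
  hβ.zu_least _ (hβ.maps _ (top_mem_Lbb F)).1 fun _ _ => hβ.mono _ _ fun _ => le_top

theorem ae_nonneg_of_lt (hm : m ≤ F) (hβ : IsCPM F m P β zd zu) (hX : X ∈ Lbb F) {z : ℝ}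
    {ρz : Ω → EReal} (hρ : IsEssInfFam m P (Mset F m P β z X) ρz) :
    ∀ᵐ ω ∂P, β X ω < z → 0 ≤ ρz ω := by
  refine hρ.ae_le_on ((hβ.maps X hX).1 measurableSet_Iio) ?_
  rintro ξ ⟨hξ, hzξ⟩
  have hle := hβ.ae_le_on hX (add_mem_Lbb hm hX hξ) (hξ.1 measurableSet_Iic)
    fun ω hω => add_le_of_nonpos_right hω
  filter_upwards [hle, hzξ] with ω hle hzξ hlt
  exact le_of_not_ge fun hξω => (hzξ.trans (hle hξω)).not_gt hlt

theorem exists_mem_Mset_le (hm : m ≤ F) (hβ : IsCPM F m P β zd zu) (hX : X ∈ Lbb F) {z : ℝ}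
    (hz : (z : EReal) < zu) {u : ℕ → ℝ} (hu : Monotone u) :
    ∃ ξ ∈ Mset F m P β z X,
      ∀ n ω, (z : EReal) < β (fun ω' => X ω' + (u n : EReal)) ω → ξ ω ≤ u n := by
  classical
  set B : ℕ → Set Ω := fun n => {ω | (z : EReal) < β (fun ω' => X ω' + (u n : EReal)) ω}
  have hB : ∀ n, MeasurableSet[m] (B n) := fun n =>
    (hβ.maps _ (add_coe_mem_Lbb hX (u n))).1 measurableSet_Ioi
  set ξ : Ω → EReal := fun ω => ⨅ n, (B n).piecewise (fun _ => (u n : EReal)) (fun _ => ⊤) ω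
  have hξm : Measurable[m] ξ := Measurable.iInf fun n =>
    measurable_const.piecewise (hB n) measurable_const
  have hξ : ξ ∈ Lbb m := ⟨hξm, u 0, fun ω => le_iInf fun n => by
    by_cases hω : ω ∈ B n
    · simpa [hω] using hu (Nat.zero_le n)
    · simp [hω]⟩
  have hXξ := add_mem_Lbb hm hX hξ
  have hhit : ∀ n, ∀ᵐ ω ∂P, ω ∈ B n ∩ {ω | (u n : EReal) ≤ ξ ω} →
      (z : EReal) ≤ β (fun ω' => X ω' + ξ ω') ω := fun n => by
    have hD : MeasurableSet[m] (B n ∩ {ω | (u n : EReal) ≤ ξ ω}) :=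
      (hB n).inter (hξm measurableSet_Ici)
    filter_upwards [hβ.ae_le_on hXξ (add_coe_mem_Lbb hX (u n)) hD
      fun ω hω => add_le_add_right hω.2 _] with ω hle hω
    exact (hω.1 : _ < _).le.trans (hle hω)
  have hnever : ∀ᵐ ω ∂P, ξ ω = ⊤ → (z : EReal) ≤ β (fun ω' => X ω' + ξ ω') ω := by
    have hXξ_top : ∀ ω ∈ {ω | ξ ω = ⊤}, ⊤ ≤ X ω + ξ ω := fun ω hω => by
      simp [show ξ ω = ⊤ from hω, EReal.add_top_of_ne_bot (bot_lt_of_mem_Lbb hX ω).ne']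
    filter_upwards [hβ.ae_le_on hXξ (top_mem_Lbb F) (hξm (measurableSet_singleton ⊤)) hXξ_top,
      hβ.ae_le_apply_top] with ω hle htop hω
    exact hz.le.trans (htop.trans (hle hω))
  refine ⟨ξ, ⟨hξ, ?_⟩, fun n ω hω => (iInf_le _ n).trans_eq (Set.piecewise_eq_of_mem _ _ _ hω)⟩
  filter_upwards [ae_all_iff.2 hhit, hnever] with ω hhit hnever
  have hu' : Monotone fun n => (u n : EReal) := fun a b hab => EReal.coe_le_coe (hu hab)
  rcases iInf_piecewise_top_eq_top_or hu' B ω with htop | ⟨n, hn, hle⟩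
  exacts [hnever htop, hhit n ⟨hn, hle⟩]

theorem ae_neg_of_lt (hm : m ≤ F) (hβ : IsCPM F m P β zd zu) (hX : X ∈ Lbb F) {z : ℝ}
    (hz : (z : EReal) < zu) {ρz : Ω → EReal} (hρ : IsEssInfFam m P (Mset F m P β z X) ρz) :
    ∀ᵐ ω ∂P, (z : EReal) < β X ω → ρz ω < 0 := by
  set u : ℕ → ℝ := fun n => -(1 / ((n : ℝ) + 1))
  have hu : Monotone u := fun a b hab => by
    simp only [u, neg_le_neg_iff]
    gcongr
  have hlim : Tendsto u atTop (𝓝 0) := by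
    simpa [u] using (tendsto_one_div_add_atTop_nhds_zero_nat (𝕜 := ℝ)).neg
  obtain ⟨ξ, hξ, hξle⟩ := hβ.exists_mem_Mset_le hm hX hz hu
  have hsup := hβ.contBelow _ X (fun n => add_coe_mem_Lbb hX (u n)) hX
    (fun ω a b hab => add_le_add_right (EReal.coe_le_coe (hu hab)) _)
    fun ω => (EReal.iSup_add_coe_eq hu hlim (X ω)).symm
  filter_upwards [hρ.2.1 ξ hξ, hsup] with ω hρξ hsup hlt
  obtain ⟨n, hn⟩ := lt_iSup_iff.1 (hsup ▸ hlt)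
  have hun : u n < 0 := neg_neg_of_pos Nat.one_div_pos_of_nat
  exact hρξ.trans_lt ((hξle n ω hn).trans_lt (by exact_mod_cast hun))

theorem ae_le_of_forall_SimpleFam_le (hm : m ≤ F) (hβ : IsCPM F m P β ⊥ zu) (hX : X ∈ Lbb F)
    {ρ : ℝ → Ω → EReal}
    (hρ : ∀ z : ℝ, (z : EReal) < zu → IsEssInfFam m P (Mset F m P β z X) (ρ z))
    {η : Ω → EReal}
    (hη : ∀ φ ∈ SimpleFam m P ρ ⊥ zu Set.univ, ∀ᵐ ω ∂P, ω ∈ Set.univ → φ ω ≤ η ω)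
    {q : ℝ} (hq : (q : EReal) < zu) :
    ∀ᵐ ω ∂P, (q : EReal) < β X ω → (q : EReal) ≤ η ω := by
  classical
  obtain ⟨hβm, c, hc⟩ := hβ.maps X hX
  set z₀ : ℝ := min c q - 1
  have hz₀c : (z₀ : EReal) < c := EReal.coe_lt_coe_iff.2 (by linarith [min_le_left c q])
  have hz₀ : (z₀ : EReal) < zu :=
    (EReal.coe_lt_coe_iff.2 (by linarith [min_le_right c q])).trans hq
  set A := {ω | (q : EReal) < β X ω}
  have hA : MeasurableSet[m] A := hβm measurableSet_Ioi
  have hρq := hβ.ae_neg_of_lt hm hX hq (hρ q hq)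
  have hρz₀ := hβ.ae_neg_of_lt hm hX hz₀ (hρ z₀ hz₀)
  have hφ := piecewise_mem_SimpleFam (P := P) (ρ := ρ) (C := Set.univ) hA
    ⟨EReal.bot_lt_coe q, hq⟩ ⟨EReal.bot_lt_coe z₀, hz₀⟩
    (by filter_upwards [hρq] with ω h hω using h hω.1)
    (by filter_upwards [hρz₀] with ω h _ using h (hz₀c.trans_le (hc ω)))
  filter_upwards [hη _ hφ] with ω h hω
  simpa [Set.piecewise_eq_of_mem _ _ _ (show ω ∈ A from hω)] using h (Set.mem_univ ω)

end IsCPM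

/-- reconstruction of a CPM with `zd = −∞` from its induced family:
`β_t(X)` is the essential supremum of the simple variables `φ = Σ z_i 1_{B_i}`, `φ < zu`,
with `ρ^{z_i}_t(X) < 0` on `B_i`. -/
theorem stmt_13 {Ω : Type*} (F m : MeasurableSpace Ω) (hm : m ≤ F) (P : @Measure Ω F)
    (β : (Ω → EReal) → Ω → EReal) (zu : EReal)
    (hCPM : IsCPM F m P β ⊥ zu)
    (X : Ω → EReal) (hX : X ∈ Lbb F)
    (ρ : ℝ → Ω → EReal)
    (hρ : ∀ z : ℝ, (z : EReal) < zu →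
      IsEssInfFam m P (Mset F m P β z X) (ρ z)) :
    IsEssSupFamOn m P (SimpleFam m P ρ ⊥ zu Set.univ) (β X) Set.univ := by
  refine ⟨fun φ hφ => ae_le_of_mem_SimpleFam
    (fun z hz => hCPM.ae_nonneg_of_lt hm hX (hρ z hz)) hφ, fun η _ hη => ?_⟩
  have hle := ae_le_of_forall_rat_lt (hCPM.le_zu X hX) fun q hq =>
    hCPM.ae_le_of_forall_SimpleFam_le hm hX hρ hη hq
  filter_upwards [hle] with ω h _ using h
end
end
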